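/- arXiv:1704.01862 — 3 statements merged into one kernel-verified Lean document; each statement's English description precedes it below -/
import Mathlib

section
/- Let A ⊆ ℝ^d be a finite nonempty set and let c be drawn uniformly at random from A. Then E[Φ({c},A)] ≤ 2·Δ₁(A); equivalently, (1/|A|)·Σ_{c∈A} Σ_{x∈A} ‖x−c‖² ≤ 2·Σ_{x∈A} ‖x−μ(A)‖². -/
open Finset
open scoped BigOperators
open Classical

noncomputable section

/-- Points of `ℝ^d`. -/
abbrev Pt (d : ℕ) := EuclideanSpace ℝ (Fin d)

/-- `Φ(C, X) = Σ_{x ∈ X} min_{c ∈ C} ‖x - c‖²`. -/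
noncomputable def Phi {d : ℕ} (C X : Finset (Pt d)) : ℝ :=
  ∑ x ∈ X, sInf ((fun c => ‖x - c‖ ^ 2) '' (C : Set (Pt d)))

/-- The centroid `μ(X)` of a finite set of points. -/
noncomputable def ctr {d : ℕ} (X : Finset (Pt d)) : Pt d :=
  (X.card : ℝ)⁻¹ • ∑ x ∈ X, x

/-- `Δ₁(X) = Φ({μ(X)}, X)`. -/
noncomputable def Delta1 {d : ℕ} (X : Finset (Pt d)) : ℝ := Phi {ctr X} X

/-- `Δ_k(X)`: the optimal `k`-means cost of `X`. -/
noncomputable def DeltaK {d : ℕ} (k : ℕ) (X : Finset (Pt d)) : ℝ :=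
  sInf ((fun C => Phi C X) '' {C : Finset (Pt d) | C.card = k})

/-- `X₁, …, X_k` is an optimal `k`-means partition of `X`. -/
def IsOptPartition {d : ℕ} (k : ℕ) (X : Finset (Pt d)) (Xs : Fin k → Finset (Pt d)) : Prop :=
  (∀ j, (Xs j).Nonempty) ∧
  (∀ j l, j ≠ l → Disjoint (Xs j) (Xs l)) ∧
  Finset.univ.biUnion Xs = X ∧
  ∑ j, Delta1 (Xs j) = DeltaK k X

/-- `X` is `(k, ε)`-irreducible: `Δ_{k-1}(X) ≥ (1+ε)·Δ_k(X)`. -/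
def KIrreducible {d : ℕ} (k : ℕ) (ε : ℝ) (X : Finset (Pt d)) : Prop :=
  (1 + ε) * DeltaK k X ≤ DeltaK (k - 1) X

/-- The invariant `P(i)`: `Ci` consists of the centers `c r` for `r < i` (clusters reindexed
so that the covered clusters come first), each `c r` is a `(1 + ε/16)`-good center for the
optimal cluster `Xs r`, and `Φ(Ci, X) > 0`. -/
def InvariantP {d k : ℕ} (ε : ℝ) (X : Finset (Pt d)) (Xs : Fin k → Finset (Pt d))
    (i : ℕ) (c : Fin k → Pt d) (Ci : Finset (Pt d)) : Prop :=
  Ci = Finset.image c (Finset.univ.filter (fun r : Fin k => r.val < i)) ∧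
  (∀ r : Fin k, r.val < i → Phi {c r} (Xs r) ≤ (1 + ε / 16) * Delta1 (Xs r)) ∧
  0 < Phi Ci X
section Centroid

variable {E : Type*}

lemma Finset.sum_sub_centroid_eq_zero [AddCommGroup E] [Module ℝ E] (s : Finset E) :
    ∑ x ∈ s, (x - (s.card : ℝ)⁻¹ • ∑ y ∈ s, y) = 0 := by
  rcases s.eq_empty_or_nonempty with rfl | hs
  · simp
  have hcard : (s.card : ℝ) ≠ 0 := by exact_mod_cast hs.card_pos.ne'
  rw [sum_sub_distrib, sum_const, ← Nat.cast_smul_eq_nsmul ℝ, smul_inv_smul₀ hcard, sub_self]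

variable [NormedAddCommGroup E] [InnerProductSpace ℝ E]

/-- The parallel axis theorem: the cross terms vanish because the deviations from the centroid
sum to zero. -/
lemma Finset.sum_norm_sub_sq_eq_sum_norm_sub_centroid_sq_add (s : Finset E) (c : E) :
    ∑ x ∈ s, ‖x - c‖ ^ 2 =
      ∑ x ∈ s, ‖x - (s.card : ℝ)⁻¹ • ∑ y ∈ s, y‖ ^ 2 +
        s.card * ‖(s.card : ℝ)⁻¹ • ∑ y ∈ s, y - c‖ ^ 2 := by
  set m := (s.card : ℝ)⁻¹ • ∑ y ∈ s, y
  have hsplit : ∀ x ∈ s,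
      ‖x - c‖ ^ 2 = ‖x - m‖ ^ 2 + 2 * inner ℝ (x - m) (m - c) + ‖m - c‖ ^ 2 :=
    fun x _ => by rw [← norm_add_sq_real, sub_add_sub_cancel]
  rw [sum_congr rfl hsplit, sum_add_distrib, sum_add_distrib, ← mul_sum, ← sum_inner,
    s.sum_sub_centroid_eq_zero, inner_zero_left, mul_zero, add_zero, sum_const, nsmul_eq_mul]

lemma Finset.sum_sum_norm_sub_sq_eq (s : Finset E) :
    ∑ c ∈ s, ∑ x ∈ s, ‖x - c‖ ^ 2 =
      2 * s.card * ∑ x ∈ s, ‖x - (s.card : ℝ)⁻¹ • ∑ y ∈ s, y‖ ^ 2 := by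
  rw [sum_congr rfl fun c _ => s.sum_norm_sub_sq_eq_sum_norm_sub_centroid_sq_add c,
    sum_add_distrib, sum_const, nsmul_eq_mul, ← mul_sum]
  simp only [norm_sub_rev _ (_ : E)]
  ring

end Centroid

theorem stmt_1_general {d : ℕ} (A : Finset (Pt d)) :
    (A.card : ℝ)⁻¹ * ∑ c ∈ A, ∑ x ∈ A, ‖x - c‖ ^ 2 ≤
      2 * ∑ x ∈ A, ‖x - ctr A‖ ^ 2 := by
  rw [A.sum_sum_norm_sub_sq_eq, ← ctr]
  rcases A.eq_empty_or_nonempty with rfl | hA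
  · simp
  have hcard : (A.card : ℝ) ≠ 0 := by exact_mod_cast hA.card_pos.ne'
  rw [mul_comm 2, mul_assoc, inv_mul_cancel_left₀ hcard]

/-- If `c` is drawn uniformly at random from a finite nonempty `A ⊆ ℝ^d`,
then `E[Φ({c}, A)] ≤ 2·Δ₁(A)`; i.e.
`(1/|A|)·Σ_{c∈A} Σ_{x∈A} ‖x−c‖² ≤ 2·Σ_{x∈A} ‖x−μ(A)‖²`. -/
theorem stmt_1 {d : ℕ} (A : Finset (Pt d)) (hA : A.Nonempty) :
    (A.card : ℝ)⁻¹ * ∑ c ∈ A, ∑ x ∈ A, ‖x - c‖ ^ 2 ≤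
      2 * ∑ x ∈ A, ‖x - ctr A‖ ^ 2 :=
  stmt_1_general A
end
end

section
/- Let C ⊆ ℝ^d be a finite nonempty set of centers and let A ⊆ ℝ^d be finite nonempty with Φ(C,A) > 0. If c is drawn from A with probability Φ(C,{c})/Φ(C,A) (D²-sampling conditioned on landing in A), then E[Φ(C∪{c},A)] ≤ 8·Δ₁(A); equivalently, Σ_{c∈A} (Φ(C,{c})/Φ(C,A))·Φ(C∪{c},A) ≤ 8·Δ₁(A). -/
open Finset
open scoped BigOperators
open Classical

noncomputable section

/-!
Write `g(x) = Φ(C, {x})`. The triangle inequality gives `g(c) ≤ 2 g(a) + 2‖a - c‖²`; averaging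
over `a ∈ A` bounds `g(c)` by `2(Φ(C, A) + S_c) / |A|` with `S_c = Σ_{a ∈ A} ‖a - c‖²`. Since
`Φ(C ∪ {c}, A)` is at most both `Φ(C, A)` and `S_c`, each term of the expectation is at most
`4 S_c / |A|`, and `Σ_{c ∈ A} S_c = 2 |A| Δ₁(A)` by the parallel axis theorem.
-/

section

variable {d : ℕ}

lemma Phi_eq_sum (C X : Finset (Pt d)) : Phi C X = ∑ x ∈ X, Phi C {x} := by
  simp only [Phi, sum_singleton]

lemma Phi_singleton_right {C : Finset (Pt d)} (hC : C.Nonempty) (x : Pt d) :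
    Phi C {x} = C.inf' hC (fun c => ‖x - c‖ ^ 2) := by
  rw [Phi, sum_singleton, inf'_eq_csInf_image]

lemma Phi_singleton_left (c : Pt d) (X : Finset (Pt d)) :
    Phi {c} X = ∑ x ∈ X, ‖x - c‖ ^ 2 := by
  simp [Phi]

lemma Phi_le_sum_norm_sub_sq {C : Finset (Pt d)} {c : Pt d} (hc : c ∈ C) (X : Finset (Pt d)) :
    Phi C X ≤ ∑ x ∈ X, ‖x - c‖ ^ 2 := by
  rw [Phi_eq_sum]
  exact sum_le_sum fun x _ => (Phi_singleton_right ⟨c, hc⟩ x).trans_le (inf'_le _ hc)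

lemma Phi_anti {C C' : Finset (Pt d)} (hC : C.Nonempty) (h : C ⊆ C') (X : Finset (Pt d)) :
    Phi C' X ≤ Phi C X := by
  rw [Phi_eq_sum, Phi_eq_sum C]
  refine sum_le_sum fun x _ => ?_
  rw [Phi_singleton_right hC, Phi_singleton_right (hC.mono h)]
  exact inf'_mono _ h hC

lemma Phi_nonneg (C X : Finset (Pt d)) : 0 ≤ Phi C X :=
  sum_nonneg fun _ _ => Real.sInf_nonneg fun _ ⟨_, _, hy⟩ => hy ▸ sq_nonneg _

lemma Phi_singleton_le {C : Finset (Pt d)} (hC : C.Nonempty) (a c : Pt d) :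
    Phi C {c} ≤ 2 * Phi C {a} + 2 * ‖a - c‖ ^ 2 := by
  obtain ⟨c₀, hc₀, ha⟩ := exists_mem_eq_inf' hC (fun c' => ‖a - c'‖ ^ 2)
  have hc : Phi C {c} ≤ ‖c - c₀‖ ^ 2 := (Phi_singleton_right hC c).trans_le (inf'_le _ hc₀)
  have htri : ‖c - c₀‖ ≤ ‖a - c‖ + ‖a - c₀‖ := by
    simpa only [norm_sub_rev c a] using norm_sub_le_norm_sub_add_norm_sub c a c₀
  rw [Phi_singleton_right hC a, ha]
  nlinarith [norm_nonneg (c - c₀), sq_nonneg (‖a - c‖ - ‖a - c₀‖)]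

lemma card_mul_Phi_singleton_le {C : Finset (Pt d)} (hC : C.Nonempty) (A : Finset (Pt d))
    (c : Pt d) : #A * Phi C {c} ≤ 2 * Phi C A + 2 * ∑ a ∈ A, ‖a - c‖ ^ 2 :=
  calc (#A : ℝ) * Phi C {c} = ∑ _a ∈ A, Phi C {c} := by rw [sum_const, nsmul_eq_mul]
    _ ≤ ∑ a ∈ A, (2 * Phi C {a} + 2 * ‖a - c‖ ^ 2) :=
        sum_le_sum fun a _ => Phi_singleton_le hC a c
    _ = 2 * Phi C A + 2 * ∑ a ∈ A, ‖a - c‖ ^ 2 := by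
        rw [sum_add_distrib, ← mul_sum, ← mul_sum, ← Phi_eq_sum]

lemma card_mul_Phi_singleton_mul_Phi_insert_le {C : Finset (Pt d)} (hC : C.Nonempty)
    (A : Finset (Pt d)) (c : Pt d) :
    #A * (Phi C {c} * Phi (insert c C) A) ≤ 4 * Phi C A * ∑ a ∈ A, ‖a - c‖ ^ 2 := by
  have hg := card_mul_Phi_singleton_le hC A c
  have hS := Phi_le_sum_norm_sub_sq (mem_insert_self c C) A
  have hΦ := Phi_anti hC (subset_insert c C) A
  have hT₀ := Phi_nonneg (insert c C) A
  have hΦ₀ := Phi_nonneg C A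
  nlinarith [mul_le_mul_of_nonneg_right hg hT₀]

lemma sum_sub_ctr (A : Finset (Pt d)) : ∑ a ∈ A, (a - ctr A) = 0 := by
  rcases A.eq_empty_or_nonempty with rfl | hA
  · exact sum_empty
  have hcard : (#A : ℝ) ≠ 0 := by exact_mod_cast hA.card_pos.ne'
  rw [sum_sub_distrib, sum_const, ctr, ← Nat.cast_smul_eq_nsmul ℝ, smul_smul,
    mul_inv_cancel₀ hcard, one_smul, sub_self]

lemma sum_norm_sub_sq_eq (A : Finset (Pt d)) (c : Pt d) :
    ∑ a ∈ A, ‖a - c‖ ^ 2 = Delta1 A + #A * ‖ctr A - c‖ ^ 2 := by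
  have hsplit (a : Pt d) : ‖a - c‖ ^ 2 =
      ‖a - ctr A‖ ^ 2 + 2 * inner ℝ (a - ctr A) (ctr A - c) + ‖ctr A - c‖ ^ 2 := by
    rw [← norm_add_sq_real, sub_add_sub_cancel]
  have hcross : ∑ a ∈ A, 2 * inner ℝ (a - ctr A) (ctr A - c) = 0 := by
    rw [← mul_sum, ← sum_inner, sum_sub_ctr, inner_zero_left, mul_zero]
  rw [sum_congr rfl fun a _ => hsplit a, sum_add_distrib, sum_add_distrib, hcross, sum_const,
    nsmul_eq_mul, Delta1, Phi_singleton_left, add_zero]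

lemma sum_sum_norm_sub_sq (A : Finset (Pt d)) :
    ∑ c ∈ A, ∑ a ∈ A, ‖a - c‖ ^ 2 = 2 * #A * Delta1 A := by
  have hΔ : ∑ c ∈ A, ‖ctr A - c‖ ^ 2 = Delta1 A := by
    simp only [Delta1, Phi_singleton_left, norm_sub_rev]
  rw [sum_congr rfl fun c _ => sum_norm_sub_sq_eq A c, sum_add_distrib, sum_const,
    nsmul_eq_mul, ← mul_sum, hΔ]
  ring

end

/-- If `c` is drawn from `A` by `D²`-sampling w.r.t. a finite nonempty
center set `C` (with `Φ(C, A) > 0`), i.e. with probability `Φ(C,{c})/Φ(C,A)`, then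
`E[Φ(C ∪ {c}, A)] ≤ 8·Δ₁(A)`. -/
theorem stmt_2 {d : ℕ} (C A : Finset (Pt d)) (hC : C.Nonempty) (hA : A.Nonempty)
    (hpos : 0 < Phi C A) :
    ∑ c ∈ A, (Phi C {c} / Phi C A) * Phi (insert c C) A ≤ 8 * Delta1 A := by
  have hcard : (0 : ℝ) < #A := by exact_mod_cast hA.card_pos
  calc ∑ c ∈ A, (Phi C {c} / Phi C A) * Phi (insert c C) A
      ≤ ∑ c ∈ A, 4 / #A * ∑ a ∈ A, ‖a - c‖ ^ 2 := by
        refine sum_le_sum fun c _ => ?_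
        rw [div_mul_eq_mul_div, div_le_iff₀ hpos, div_mul_eq_mul_div, div_mul_eq_mul_div,
          le_div_iff₀ hcard]
        linarith [card_mul_Phi_singleton_mul_Phi_insert_le hC A c]
    _ = 4 / #A * (2 * #A * Delta1 A) := by rw [← mul_sum, sum_sum_norm_sub_sq]
    _ = 8 * Delta1 A := by field_simp; ring
end
end

section
/- Let X ⊆ ℝ^d be a finite set of n points and k > 1 a positive integer. Run Query-k-means++: pick c uniformly at random from X, set C = {c}, and then perform k−1 outer iterations of Query-k-means++; let C denote the final (random) center set. Then E[Φ(C,X)] ≤ 24·Δ_k(X). -/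
/-
Call an optimal cluster covered once it contains a center. With `t` outer iterations still to
run from the center set `C`, the expected final cost is at most the potential
`(2 + t/(k-1)) Φ(C, covered) + 24 Δ₁(uncovered) + [t < #uncovered] Φ(C, uncovered)`, by
induction on `t`. In one iteration a try fails (samples from a covered cluster) with probability
`β = Φ(C, covered) / Φ(C, X)`. A success in cluster `X_j` leaves cost `8 Δ₁(X_j)` there in
expectation (Arthur–Vassilvitskii), which the coefficient `2 + t/(k-1) ≤ 3` turns into
`24 Δ₁(X_j)`. When `β ≤ 1/2`, all `⌈log₂ k⌉` tries fail with probability at most `1/k`, so the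
uncovered cost kept then is paid for by raising the covered coefficient by `1/(k-1)`.
Starting from one center `c ∈ X_j`, the coefficient is `3` after `k - 1` iterations, and the
average of `Φ({c}, X_j)` over `c ∈ X_j` is `2 Δ₁(X_j)`; this gives `24 Δ_k(X)`.
-/

open Finset
open scoped BigOperators
open Classical

noncomputable section

/-- `x` belongs to an optimal cluster that contains no point of `C` ("uncovered"). -/
def Uncov {d k : ℕ} (Xs : Fin k → Finset (Pt d)) (C : Finset (Pt d)) (x : Pt d) : Prop :=
  ∃ j, x ∈ Xs j ∧ ∀ c ∈ C, c ∉ Xs j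

/-- Transition probability of the inner loop of one outer iteration of `Query-k-means++`,
with `r` tries remaining: repeatedly `D²`-sample `x` from `X` w.r.t. `C`; if the optimal
cluster of `x` is uncovered, add `x` to `C` and stop; after `r` failed tries, keep `C`. -/
noncomputable def tryK {d k : ℕ} (X : Finset (Pt d)) (Xs : Fin k → Finset (Pt d)) :
    ℕ → Finset (Pt d) → Finset (Pt d) → ℝ
  | 0, C, C' => if C' = C then 1 else 0
  | r + 1, C, C' =>
    ∑ x ∈ X, (Phi C {x} / Phi C X) *
      (if Uncov Xs C x then (if C' = insert x C then 1 else 0) else tryK X Xs r C C')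

/-- Transition probability of one outer iteration of `Query-k-means++` (at most
`⌈log₂ k⌉` tries); if `Φ(C, X) = 0` the iteration leaves `C` unchanged. -/
noncomputable def iterK {d k : ℕ} (X : Finset (Pt d)) (Xs : Fin k → Finset (Pt d))
    (C C' : Finset (Pt d)) : ℝ :=
  if Phi C X = 0 then (if C' = C then 1 else 0) else tryK X Xs (Nat.clog 2 k) C C'

/-- Transition probability of `t` outer iterations of `Query-k-means++`. -/
noncomputable def stepsK {d k : ℕ} (X : Finset (Pt d)) (Xs : Fin k → Finset (Pt d)) :
    ℕ → Finset (Pt d) → Finset (Pt d) → ℝ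
  | 0, C, C' => if C' = C then 1 else 0
  | t + 1, C, C' => ∑ D ∈ (X ∪ C).powerset, iterK X Xs C D * stepsK X Xs t D C'

open Function

namespace KMeans

variable {d : ℕ}

lemma Phi_eq_sum_singleton (C Y : Finset (Pt d)) : Phi C Y = ∑ x ∈ Y, Phi C {x} := by
  simp [Phi]

lemma Phi_singleton_left (c : Pt d) (Y : Finset (Pt d)) :
    Phi {c} Y = ∑ y ∈ Y, ‖y - c‖ ^ 2 := by
  simp [Phi]

lemma Phi_nonneg (C Y : Finset (Pt d)) : 0 ≤ Phi C Y :=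
  sum_nonneg fun _ _ => Real.sInf_nonneg (by rintro _ ⟨c, -, rfl⟩; positivity)

lemma Delta1_nonneg (A : Finset (Pt d)) : 0 ≤ Delta1 A := Phi_nonneg _ _

lemma Phi_singleton_le_of_mem {C : Finset (Pt d)} {c : Pt d} (hc : c ∈ C) (x : Pt d) :
    Phi C {x} ≤ ‖x - c‖ ^ 2 := by
  rw [Phi, sum_singleton]
  exact csInf_le ⟨0, by rintro _ ⟨c, -, rfl⟩; positivity⟩ ⟨c, hc, rfl⟩

lemma exists_Phi_singleton_eq {C : Finset (Pt d)} (hC : C.Nonempty) (x : Pt d) :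
    ∃ c ∈ C, Phi C {x} = ‖x - c‖ ^ 2 := by
  obtain ⟨c, hc, hmin⟩ := C.exists_min_image (fun c => ‖x - c‖ ^ 2) hC
  refine ⟨c, hc, (Phi_singleton_le_of_mem hc x).antisymm ?_⟩
  rw [Phi, sum_singleton]
  exact le_csInf ⟨_, c, hc, rfl⟩ (by rintro _ ⟨c', hc', rfl⟩; exact hmin c' hc')

lemma Phi_anti {C C' : Finset (Pt d)} (h : C ⊆ C') (hC : C.Nonempty) (Y : Finset (Pt d)) :
    Phi C' Y ≤ Phi C Y := by
  rw [Phi_eq_sum_singleton, Phi_eq_sum_singleton]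
  gcongr with x
  obtain ⟨c, hc, hx⟩ := exists_Phi_singleton_eq hC x
  exact hx ▸ Phi_singleton_le_of_mem (h hc) x

lemma Phi_singleton_le_two_mul {C : Finset (Pt d)} (hC : C.Nonempty) (x y : Pt d) :
    Phi C {x} ≤ 2 * ‖y - x‖ ^ 2 + 2 * Phi C {y} := by
  obtain ⟨c, hc, hy⟩ := exists_Phi_singleton_eq hC y
  have htri : ‖x - c‖ ≤ ‖y - x‖ + ‖y - c‖ := by
    simpa [norm_sub_rev x y] using norm_sub_le_norm_sub_add_norm_sub x y c
  rw [hy]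
  nlinarith [Phi_singleton_le_of_mem hc x, sq_nonneg (‖y - x‖ - ‖y - c‖), norm_nonneg (x - c)]

lemma sum_sub_ctr {A : Finset (Pt d)} (hA : A.Nonempty) : ∑ y ∈ A, (y - ctr A) = 0 := by
  have hcard : (#A : ℝ) ≠ 0 := by exact_mod_cast hA.card_pos.ne'
  rw [sum_sub_distrib, sum_const, ctr, ← Nat.cast_smul_eq_nsmul ℝ, smul_smul,
    mul_inv_cancel₀ hcard, one_smul, sub_self]

/-- The parallel axis theorem. -/
lemma Phi_singleton_left_eq_Delta1_add {A : Finset (Pt d)} (hA : A.Nonempty) (c : Pt d) :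
    Phi {c} A = Delta1 A + #A * ‖c - ctr A‖ ^ 2 := by
  have hsplit : ∀ y ∈ A, ‖y - c‖ ^ 2
      = ‖y - ctr A‖ ^ 2 + 2 * inner ℝ (y - ctr A) (ctr A - c) + ‖ctr A - c‖ ^ 2 := fun y _ => by
    rw [← norm_add_sq_real, sub_add_sub_cancel]
  rw [Phi_singleton_left, sum_congr rfl hsplit, sum_add_distrib, sum_add_distrib, ← mul_sum,
    ← sum_inner, sum_sub_ctr hA, inner_zero_left, sum_const, nsmul_eq_mul, norm_sub_rev c,
    Delta1, Phi_singleton_left]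
  ring

lemma sum_Phi_singleton_left (A : Finset (Pt d)) :
    ∑ c ∈ A, Phi {c} A = 2 * #A * Delta1 A := by
  rcases A.eq_empty_or_nonempty with rfl | hA
  · simp
  simp only [Phi_singleton_left_eq_Delta1_add hA, sum_add_distrib, sum_const, nsmul_eq_mul,
    ← mul_sum]
  rw [Delta1, Phi_singleton_left]
  ring

lemma card_mul_Phi_singleton_le {C : Finset (Pt d)} (hC : C.Nonempty) (A : Finset (Pt d))
    (x : Pt d) : #A * Phi C {x} ≤ 2 * Phi {x} A + 2 * Phi C A := by
  rw [Phi_singleton_left, Phi_eq_sum_singleton C A, mul_sum, mul_sum, ← sum_add_distrib,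
    ← nsmul_eq_mul, ← sum_const]
  exact sum_le_sum fun y _ => Phi_singleton_le_two_mul hC x y

/-- Arthur–Vassilvitskii: in expectation over a `D²`-sample `x` from `A`,
`Φ(C ∪ {x}, A) ≤ 8 Δ₁(A)`. -/
lemma sum_Phi_singleton_mul_Phi_insert_le {C : Finset (Pt d)} (hC : C.Nonempty)
    (A : Finset (Pt d)) :
    ∑ x ∈ A, Phi C {x} * Phi (insert x C) A ≤ 8 * Delta1 A * Phi C A := by
  rcases A.eq_empty_or_nonempty with rfl | hA
  · simp [Phi]
  have hpoint : ∀ x ∈ A, #A * (Phi C {x} * Phi (insert x C) A) ≤ 4 * Phi C A * Phi {x} A := by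
    intro x _
    have hfar : Phi (insert x C) A ≤ Phi C A := Phi_anti (subset_insert x C) hC A
    have hnear : Phi (insert x C) A ≤ Phi {x} A :=
      Phi_anti (singleton_subset_iff.mpr (mem_insert_self x C)) (singleton_nonempty x) A
    nlinarith [card_mul_Phi_singleton_le hC A x, Phi_nonneg (insert x C) A,
      Phi_nonneg {x} A, Phi_nonneg C A]
  have hsum := sum_le_sum hpoint
  rw [← mul_sum, ← mul_sum, sum_Phi_singleton_left] at hsum
  have hcard : (0 : ℝ) < #A := by exact_mod_cast hA.card_pos
  nlinarith

section Chain

variable {d k : ℕ} (X : Finset (Pt d)) (Xs : Fin k → Finset (Pt d))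

lemma tryK_nonneg (r : ℕ) (C D : Finset (Pt d)) : 0 ≤ tryK X Xs r C D := by
  induction r with
  | zero => simp only [tryK]; positivity
  | succ r ih =>
    simp only [tryK]
    refine sum_nonneg fun x _ => mul_nonneg (div_nonneg (Phi_nonneg _ _) (Phi_nonneg _ _)) ?_
    split_ifs
    exacts [zero_le_one, le_rfl, ih]

lemma iterK_nonneg (C D : Finset (Pt d)) : 0 ≤ iterK X Xs C D := by
  unfold iterK
  split_ifs
  exacts [zero_le_one, le_rfl, tryK_nonneg X Xs _ C D]

variable {X Xs} in
lemma tryK_support {r : ℕ} {C D : Finset (Pt d)} (h : tryK X Xs r C D ≠ 0) :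
    C ⊆ D ∧ D ⊆ X ∪ C := by
  induction r with
  | zero =>
    obtain rfl : D = C := by simpa [tryK] using h
    exact ⟨subset_rfl, subset_union_right⟩
  | succ r ih =>
    obtain ⟨x, hx, hterm⟩ := exists_ne_zero_of_sum_ne_zero h
    split_ifs at hterm with hu hD
    · subst hD
      exact ⟨subset_insert x C, insert_subset (mem_union_left C hx) subset_union_right⟩
    · simp at hterm
    · exact ih (right_ne_zero_of_mul hterm)

variable {X Xs} in
lemma iterK_support {C D : Finset (Pt d)} (h : iterK X Xs C D ≠ 0) : C ⊆ D ∧ D ⊆ X ∪ C := by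
  unfold iterK at h
  split_ifs at h with hΦ hD
  · exact hD ▸ ⟨subset_rfl, subset_union_right⟩
  · simp at h
  · exact tryK_support h

lemma self_mem_powerset_union (C : Finset (Pt d)) : C ∈ (X ∪ C).powerset :=
  mem_powerset.mpr subset_union_right

lemma sum_tryK_zero_mul (C : Finset (Pt d)) (f : Finset (Pt d) → ℝ) :
    ∑ D ∈ (X ∪ C).powerset, tryK X Xs 0 C D * f D = f C := by
  simp only [tryK, ite_mul, one_mul, zero_mul]
  rw [sum_ite_eq', if_pos (self_mem_powerset_union X C)]

lemma sum_tryK_succ_mul (r : ℕ) (C : Finset (Pt d)) (f : Finset (Pt d) → ℝ) :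
    ∑ D ∈ (X ∪ C).powerset, tryK X Xs (r + 1) C D * f D
      = ∑ x ∈ X, Phi C {x} / Phi C X * (if Uncov Xs C x then f (insert x C)
          else ∑ D ∈ (X ∪ C).powerset, tryK X Xs r C D * f D) := by
  simp only [tryK, sum_mul]
  rw [sum_comm]
  refine sum_congr rfl fun x hx => ?_
  split_ifs with hu
  · have hmem : insert x C ∈ (X ∪ C).powerset :=
      mem_powerset.mpr (insert_subset (mem_union_left C hx) subset_union_right)
    simp only [mul_ite, mul_one, mul_zero, ite_mul, zero_mul]
    rw [sum_ite_eq', if_pos hmem]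
  · simp only [mul_sum, mul_assoc]

lemma sum_tryK {C : Finset (Pt d)} (hΦ : Phi C X ≠ 0) (r : ℕ) :
    ∑ D ∈ (X ∪ C).powerset, tryK X Xs r C D = 1 := by
  induction r with
  | zero => simpa using sum_tryK_zero_mul X Xs C 1
  | succ r ih =>
    have h := sum_tryK_succ_mul X Xs r C 1
    simp only [Pi.one_apply, mul_one, ih, ite_self] at h
    rw [h, ← sum_div, ← Phi_eq_sum_singleton, div_self hΦ]

lemma sum_iterK_mul_of_Phi_ne_zero {C : Finset (Pt d)} (hΦ : Phi C X ≠ 0)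
    (f : Finset (Pt d) → ℝ) :
    ∑ D ∈ (X ∪ C).powerset, iterK X Xs C D * f D
      = ∑ D ∈ (X ∪ C).powerset, tryK X Xs (Nat.clog 2 k) C D * f D := by
  simp [iterK, hΦ]

lemma sum_iterK (C : Finset (Pt d)) : ∑ D ∈ (X ∪ C).powerset, iterK X Xs C D = 1 := by
  by_cases hΦ : Phi C X = 0
  · simp only [iterK, hΦ, if_true]
    rw [sum_ite_eq', if_pos (self_mem_powerset_union X C)]
  · have h := sum_iterK_mul_of_Phi_ne_zero X Xs hΦ 1
    simp only [Pi.one_apply, mul_one] at h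
    rw [h, sum_tryK X Xs hΦ]

def expectedCost (t : ℕ) (C : Finset (Pt d)) : ℝ :=
  ∑ C' ∈ (X ∪ C).powerset, stepsK X Xs t C C' * Phi C' X

lemma expectedCost_zero (C : Finset (Pt d)) : expectedCost X Xs 0 C = Phi C X := by
  simp only [expectedCost, stepsK, ite_mul, one_mul, zero_mul]
  rw [sum_ite_eq', if_pos (self_mem_powerset_union X C)]

lemma expectedCost_succ (t : ℕ) (C : Finset (Pt d)) :
    expectedCost X Xs (t + 1) C
      = ∑ D ∈ (X ∪ C).powerset, iterK X Xs C D * expectedCost X Xs t D := by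
  simp only [expectedCost, stepsK, sum_mul, mul_sum]
  rw [sum_comm]
  refine sum_congr rfl fun D _ => ?_
  by_cases hD : iterK X Xs C D = 0
  · simp [hD]
  obtain ⟨hCD, hDX⟩ := iterK_support hD
  have hunion : X ∪ D = X ∪ C :=
    (union_subset subset_union_left hDX).antisymm (union_subset_union_right hCD)
  simp only [hunion, mul_assoc]

lemma expectedCost_le_Phi (t : ℕ) {C : Finset (Pt d)} (hC : C.Nonempty) :
    expectedCost X Xs t C ≤ Phi C X := by
  induction t generalizing C with
  | zero => exact (expectedCost_zero X Xs C).le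
  | succ t ih =>
    rw [expectedCost_succ]
    calc ∑ D ∈ (X ∪ C).powerset, iterK X Xs C D * expectedCost X Xs t D
        ≤ ∑ D ∈ (X ∪ C).powerset, iterK X Xs C D * Phi C X := by
          refine sum_le_sum fun D _ => ?_
          by_cases hD : iterK X Xs C D = 0
          · simp [hD]
          have hCD := (iterK_support hD).1
          exact mul_le_mul_of_nonneg_left ((ih (hC.mono hCD)).trans (Phi_anti hCD hC X))
            (iterK_nonneg X Xs C D)
      _ = Phi C X := by rw [← sum_mul, sum_iterK, one_mul]

/-- The probability that one `D²`-sample from `X` w.r.t. `C` lands in a covered cluster. -/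
def failProb (C : Finset (Pt d)) : ℝ :=
  (∑ x ∈ X with ¬Uncov Xs C x, Phi C {x}) / Phi C X

lemma failProb_nonneg (C : Finset (Pt d)) : 0 ≤ failProb X Xs C :=
  div_nonneg (sum_nonneg fun _ _ => Phi_nonneg _ _) (Phi_nonneg _ _)

/-- Each try fails with probability `failProb`, keeping `C`; a success is worth at most `M`
in expectation. -/
lemma sum_tryK_mul_le {C : Finset (Pt d)} (hΦ : 0 < Phi C X) {f : Finset (Pt d) → ℝ}
    (hfC : f C ≤ Phi C X) {M : ℝ}
    (hsucc : ∑ x ∈ X with Uncov Xs C x, Phi C {x} * f (insert x C)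
      ≤ (∑ x ∈ X with Uncov Xs C x, Phi C {x}) * M) (r : ℕ) :
    ∑ D ∈ (X ∪ C).powerset, tryK X Xs r C D * f D
      ≤ failProb X Xs C ^ r * Phi C X + (1 - failProb X Xs C ^ r) * M := by
  have hsuccProb : (∑ x ∈ X with Uncov Xs C x, Phi C {x}) / Phi C X = 1 - failProb X Xs C := by
    rw [eq_sub_iff_add_eq, failProb, ← add_div, sum_filter_add_sum_filter_not,
      ← Phi_eq_sum_singleton, div_self hΦ.ne']
  set β := failProb X Xs C with hβ
  induction r with
  | zero => simpa only [sum_tryK_zero_mul, pow_zero, one_mul, sub_self, zero_mul, add_zero]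
  | succ r ih =>
    set S := ∑ D ∈ (X ∪ C).powerset, tryK X Xs r C D * f D
    have hsplit : ∑ D ∈ (X ∪ C).powerset, tryK X Xs (r + 1) C D * f D
        = (∑ x ∈ X with Uncov Xs C x, Phi C {x} * f (insert x C)) / Phi C X + β * S := by
      rw [sum_tryK_succ_mul, ← sum_filter_add_sum_filter_not _ (Uncov Xs C)]
      rw [hβ, failProb, sum_div, sum_div, sum_mul]
      congr 1 <;> refine sum_congr rfl fun x hx => ?_
      · rw [if_pos (mem_filter.mp hx).2]; ring
      · rw [if_neg (mem_filter.mp hx).2]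
    have hsucc' : (∑ x ∈ X with Uncov Xs C x, Phi C {x} * f (insert x C)) / Phi C X
        ≤ (1 - β) * M := by
      rw [← hsuccProb, div_mul_eq_mul_div]
      exact div_le_div_of_nonneg_right hsucc hΦ.le
    rw [hsplit]
    calc _ ≤ (1 - β) * M + β * (β ^ r * Phi C X + (1 - β ^ r) * M) :=
          add_le_add hsucc' (mul_le_mul_of_nonneg_left ih (failProb_nonneg X Xs C))
      _ = β ^ (r + 1) * Phi C X + (1 - β ^ (r + 1)) * M := by ring

end Chain

section Clusters

variable {d k : ℕ} (Xs : Fin k → Finset (Pt d))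

def covered (C : Finset (Pt d)) : Finset (Fin k) := {j | ∃ c ∈ C, c ∈ Xs j}

def coveredCost (C : Finset (Pt d)) : ℝ := ∑ j ∈ covered Xs C, Phi C (Xs j)

def uncoveredCost (C : Finset (Pt d)) : ℝ := ∑ j ∈ (covered Xs C)ᶜ, Phi C (Xs j)

def uncoveredOpt (C : Finset (Pt d)) : ℝ := ∑ j ∈ (covered Xs C)ᶜ, Delta1 (Xs j)

lemma coveredCost_nonneg (C : Finset (Pt d)) : 0 ≤ coveredCost Xs C :=
  sum_nonneg fun _ _ => Phi_nonneg _ _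

lemma uncoveredCost_nonneg (C : Finset (Pt d)) : 0 ≤ uncoveredCost Xs C :=
  sum_nonneg fun _ _ => Phi_nonneg _ _

lemma uncoveredOpt_nonneg (C : Finset (Pt d)) : 0 ≤ uncoveredOpt Xs C :=
  sum_nonneg fun _ _ => Delta1_nonneg _

variable {Xs}

lemma mem_covered {C : Finset (Pt d)} {j : Fin k} : j ∈ covered Xs C ↔ ∃ c ∈ C, c ∈ Xs j := by
  simp [covered]

lemma covered_mono {C C' : Finset (Pt d)} (h : C ⊆ C') : covered Xs C ⊆ covered Xs C' :=
  fun _ hj => have ⟨c, hc, hcj⟩ := mem_covered.mp hj; mem_covered.mpr ⟨c, h hc, hcj⟩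

lemma covered_insert (hXs : Pairwise (Disjoint on Xs)) (C : Finset (Pt d)) {x : Pt d} {j : Fin k}
    (hx : x ∈ Xs j) : covered Xs (insert x C) = insert j (covered Xs C) := by
  ext l
  simp only [mem_covered, mem_insert, exists_eq_or_imp]
  refine or_congr_left ⟨fun hxl => ?_, fun hlj => hlj ▸ hx⟩
  by_contra hlj
  exact disjoint_left.mp (hXs hlj) hxl hx

lemma covered_singleton (hXs : Pairwise (Disjoint on Xs)) {c : Pt d} {j : Fin k}
    (hc : c ∈ Xs j) : covered Xs {c} = {j} := by
  rw [← insert_empty, covered_insert hXs ∅ hc]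
  simp [covered]

lemma uncov_iff (hXs : Pairwise (Disjoint on Xs)) {C : Finset (Pt d)} {x : Pt d} {j : Fin k}
    (hx : x ∈ Xs j) : Uncov Xs C x ↔ j ∉ covered Xs C := by
  simp only [Uncov, mem_covered, not_exists, not_and]
  refine ⟨fun ⟨l, hxl, hl⟩ c hc hcj => ?_, fun h => ⟨j, hx, fun c hc hcj => h c hc hcj⟩⟩
  obtain rfl : j = l := by
    by_contra hjl
    exact disjoint_left.mp (hXs hjl) hx hxl
  exact hl c hc hcj

lemma filter_uncov_eq_biUnion (hXs : Pairwise (Disjoint on Xs)) (C : Finset (Pt d)) :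
    {x ∈ univ.biUnion Xs | Uncov Xs C x} = (covered Xs C)ᶜ.biUnion Xs := by
  ext x
  simp only [mem_filter, mem_biUnion, mem_univ, true_and, mem_compl]
  exact ⟨fun ⟨⟨j, hx⟩, hu⟩ => ⟨j, (uncov_iff hXs hx).mp hu, hx⟩,
    fun ⟨j, hj, hx⟩ => ⟨⟨j, hx⟩, (uncov_iff hXs hx).mpr hj⟩⟩

lemma filter_not_uncov_eq_biUnion (hXs : Pairwise (Disjoint on Xs)) (C : Finset (Pt d)) :
    {x ∈ univ.biUnion Xs | ¬Uncov Xs C x} = (covered Xs C).biUnion Xs := by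
  ext x
  simp only [mem_filter, mem_biUnion, mem_univ, true_and]
  exact ⟨fun ⟨⟨j, hx⟩, hu⟩ => ⟨j, not_not.mp (mt (uncov_iff hXs hx).mpr hu), hx⟩,
    fun ⟨j, hj, hx⟩ => ⟨⟨j, hx⟩, fun hu => (uncov_iff hXs hx).mp hu hj⟩⟩

lemma Phi_biUnion (hXs : Pairwise (Disjoint on Xs)) (C : Finset (Pt d)) (s : Finset (Fin k)) :
    Phi C (s.biUnion Xs) = ∑ j ∈ s, Phi C (Xs j) := by
  simp only [Phi, sum_biUnion (hXs.set_pairwise _)]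

lemma failProb_eq (hXs : Pairwise (Disjoint on Xs)) (C : Finset (Pt d)) :
    failProb (univ.biUnion Xs) Xs C = coveredCost Xs C / Phi C (univ.biUnion Xs) := by
  rw [failProb, ← Phi_eq_sum_singleton, filter_not_uncov_eq_biUnion hXs, Phi_biUnion hXs,
    coveredCost]

lemma Phi_eq_coveredCost_add_uncoveredCost (hXs : Pairwise (Disjoint on Xs))
    (C : Finset (Pt d)) : Phi C (univ.biUnion Xs) = coveredCost Xs C + uncoveredCost Xs C := by
  rw [Phi_biUnion hXs, coveredCost, uncoveredCost, sum_add_sum_compl]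

end Clusters

section Insert

variable {d k : ℕ} {Xs : Fin k → Finset (Pt d)} {C : Finset (Pt d)} {x : Pt d} {j : Fin k}

lemma coveredCost_insert_le (hXs : Pairwise (Disjoint on Xs)) (hC : C.Nonempty)
    (hx : x ∈ Xs j) (hj : j ∉ covered Xs C) :
    coveredCost Xs (insert x C) ≤ coveredCost Xs C + Phi (insert x C) (Xs j) := by
  rw [coveredCost, coveredCost, covered_insert hXs C hx, sum_insert hj, add_comm]
  gcongr with l
  exact Phi_anti (subset_insert x C) hC _

lemma uncoveredOpt_insert (hXs : Pairwise (Disjoint on Xs)) (hx : x ∈ Xs j)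
    (hj : j ∉ covered Xs C) :
    uncoveredOpt Xs (insert x C) = uncoveredOpt Xs C - Delta1 (Xs j) := by
  rw [uncoveredOpt, uncoveredOpt, covered_insert hXs C hx, compl_insert,
    sum_erase_eq_sub (mem_compl.mpr hj)]

lemma card_compl_covered_insert (hXs : Pairwise (Disjoint on Xs)) (hx : x ∈ Xs j)
    (hj : j ∉ covered Xs C) :
    #(covered Xs (insert x C))ᶜ = #(covered Xs C)ᶜ - 1 := by
  rw [covered_insert hXs C hx, compl_insert, card_erase_of_mem (mem_compl.mpr hj)]

lemma uncoveredCost_anti {C' : Finset (Pt d)} (h : C ⊆ C') (hC : C.Nonempty) :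
    uncoveredCost Xs C' ≤ uncoveredCost Xs C := by
  calc uncoveredCost Xs C' ≤ ∑ l ∈ (covered Xs C')ᶜ, Phi C (Xs l) :=
        sum_le_sum fun l _ => Phi_anti h hC _
    _ ≤ uncoveredCost Xs C :=
        sum_le_sum_of_subset_of_nonneg (compl_subset_compl.mpr (covered_mono h))
          fun _ _ _ => Phi_nonneg _ _

end Insert

section Potential

variable {d k : ℕ} (Xs : Fin k → Finset (Pt d))

/-- The bound on the expected final cost with `t` outer iterations to go. If more than `t`
clusters are uncovered, some of them stay uncovered, and their cost is bounded only by its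
current value. -/
def potential (A : ℝ) (t : ℕ) (C : Finset (Pt d)) : ℝ :=
  A * coveredCost Xs C + 24 * uncoveredOpt Xs C +
    if t < #(covered Xs C)ᶜ then uncoveredCost Xs C else 0

variable {Xs} {C : Finset (Pt d)} {A : ℝ}

lemma potential_nonneg (hA : 0 ≤ A) (t : ℕ) (C : Finset (Pt d)) : 0 ≤ potential Xs A t C := by
  have := coveredCost_nonneg Xs C
  have := uncoveredOpt_nonneg Xs C
  have := uncoveredCost_nonneg Xs C
  unfold potential
  split_ifs <;> positivity

lemma potential_insert_le (hXs : Pairwise (Disjoint on Xs)) (hC : C.Nonempty) (hA : 0 ≤ A)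
    (t : ℕ) {x : Pt d} {j : Fin k} (hx : x ∈ Xs j) (hj : j ∉ covered Xs C) :
    potential Xs A t (insert x C)
      ≤ potential Xs A (t + 1) C + A * Phi (insert x C) (Xs j) - 24 * Delta1 (Xs j) := by
  have hcov := mul_le_mul_of_nonneg_left (coveredCost_insert_le hXs hC hx hj) hA
  have hunc : (if t < #(covered Xs (insert x C))ᶜ then uncoveredCost Xs (insert x C) else 0)
      ≤ if t + 1 < #(covered Xs C)ᶜ then uncoveredCost Xs C else 0 := by
    rw [card_compl_covered_insert hXs hx hj]
    have hiff : t < #(covered Xs C)ᶜ - 1 ↔ t + 1 < #(covered Xs C)ᶜ := by omega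
    split_ifs <;> first | tauto | exact uncoveredCost_anti (subset_insert x C) hC
  rw [potential, potential, uncoveredOpt_insert hXs hx hj]
  linarith

lemma sum_mul_potential_insert_le (hXs : Pairwise (Disjoint on Xs)) (hC : C.Nonempty)
    (hA : 0 ≤ A) (hA3 : A ≤ 3) (t : ℕ) {j : Fin k} (hj : j ∉ covered Xs C) :
    ∑ x ∈ Xs j, Phi C {x} * potential Xs A t (insert x C)
      ≤ Phi C (Xs j) * potential Xs A (t + 1) C := by
  set P := potential Xs A (t + 1) C
  calc ∑ x ∈ Xs j, Phi C {x} * potential Xs A t (insert x C)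
      ≤ ∑ x ∈ Xs j, Phi C {x} * (P + A * Phi (insert x C) (Xs j) - 24 * Delta1 (Xs j)) :=
        sum_le_sum fun x hx => mul_le_mul_of_nonneg_left
          (potential_insert_le hXs hC hA t hx hj) (Phi_nonneg _ _)
    _ = Phi C (Xs j) * (P - 24 * Delta1 (Xs j)) +
          A * ∑ x ∈ Xs j, Phi C {x} * Phi (insert x C) (Xs j) := by
        rw [Phi_eq_sum_singleton C (Xs j), sum_mul, mul_sum, ← sum_add_distrib]
        exact sum_congr rfl fun x _ => by ring
    _ ≤ Phi C (Xs j) * (P - 24 * Delta1 (Xs j)) + A * (8 * Delta1 (Xs j) * Phi C (Xs j)) := by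
        gcongr
        exact sum_Phi_singleton_mul_Phi_insert_le hC _
    _ ≤ Phi C (Xs j) * P := by
        nlinarith [mul_nonneg (mul_nonneg (Phi_nonneg C (Xs j)) (Delta1_nonneg (Xs j)))
          (sub_nonneg.mpr hA3)]

lemma sum_filter_uncov_mul_potential_insert_le (hXs : Pairwise (Disjoint on Xs))
    (hC : C.Nonempty) (hA : 0 ≤ A) (hA3 : A ≤ 3) (t : ℕ) :
    ∑ x ∈ univ.biUnion Xs with Uncov Xs C x, Phi C {x} * potential Xs A t (insert x C)
      ≤ (∑ x ∈ univ.biUnion Xs with Uncov Xs C x, Phi C {x}) * potential Xs A (t + 1) C := by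
  rw [filter_uncov_eq_biUnion hXs, sum_biUnion (hXs.set_pairwise _),
    sum_biUnion (hXs.set_pairwise _), sum_mul]
  gcongr with j hj
  rw [← Phi_eq_sum_singleton]
  exact sum_mul_potential_insert_le hXs hC hA hA3 t (mem_compl.mp hj)

end Potential

lemma pow_mul_one_sub_mul_le {s : ℝ} (hs0 : 0 ≤ s) (hs : s ≤ 1 / 2) (n : ℕ) :
    s ^ n * (1 - s) * (2 ^ (n + 1) - 1) ≤ 1 := by
  cases n with
  | zero => norm_num; linarith
  | succ n =>
    have hpow : s ^ n ≤ (1 / 2) ^ n := pow_le_pow_left₀ hs0 hs n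
    have hvar : s * (1 - s) ≤ 1 / 4 := by nlinarith [sq_nonneg (s - 1 / 2)]
    have hvar0 : 0 ≤ s * (1 - s) := mul_nonneg hs0 (by linarith)
    have hhalf : (1 / 2 : ℝ) ^ n * 2 ^ n = 1 := by rw [← mul_pow]; norm_num
    calc s ^ (n + 1) * (1 - s) * (2 ^ (n + 1 + 1) - 1)
        ≤ s ^ n * (s * (1 - s)) * 2 ^ (n + 2) := by
          rw [pow_succ]
          nlinarith [pow_nonneg hs0 n]
      _ ≤ (1 / 2) ^ n * (1 / 4) * 2 ^ (n + 2) := by gcongr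
      _ = (1 / 2) ^ n * 2 ^ n := by ring
      _ = 1 := hhalf

/-- `a / (a + b)` is the failure probability of one try, `a` and `b` being the covered and
uncovered costs: `b`, kept when all `⌈log₂ k⌉` tries fail, is paid for by `a / (k - 1)`. -/
lemma pow_clog_mul_le {a b : ℝ} (ha : 0 ≤ a) (hb : 0 ≤ b) {k : ℕ} (hk : 1 < k) :
    (a / (a + b)) ^ Nat.clog 2 k * b ≤ (a / (a + b)) ^ Nat.clog 2 k * a + a / (k - 1) := by
  set s := a / (a + b)
  have hs0 : 0 ≤ s := by positivity
  have hk1 : (0 : ℝ) < k - 1 := by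
    have : (1 : ℝ) < k := by exact_mod_cast hk
    linarith
  rcases le_or_gt b a with hba | hab
  · have := mul_le_mul_of_nonneg_left hba (pow_nonneg hs0 (Nat.clog 2 k))
    have : 0 ≤ a / (k - 1) := by positivity
    linarith
  have hpos : 0 < a + b := by linarith
  have hs : s ≤ 1 / 2 := by rw [div_le_iff₀ hpos]; linarith
  obtain ⟨n, hn⟩ : ∃ n, Nat.clog 2 k = n + 1 :=
    Nat.exists_eq_add_one.mpr (Nat.clog_pos one_lt_two hk)
  have hk2 : (k : ℝ) ≤ 2 ^ (n + 1) := by exact_mod_cast hn ▸ Nat.le_pow_clog one_lt_two k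
  have hsa : s * (a + b) = a := div_mul_cancel₀ a hpos.ne'
  have hsb : (1 - s) * (a + b) = b := by rw [sub_mul, hsa]; ring
  have hmain : s ^ (n + 1) * b * (k - 1) ≤ a := by
    calc s ^ (n + 1) * b * (k - 1) = a * (s ^ n * (1 - s) * (k - 1)) := by
          linear_combination (s ^ n * (k - 1)) * ((1 - s) * hsa - s * hsb)
      _ ≤ a * (s ^ n * (1 - s) * (2 ^ (n + 1) - 1)) := by
          gcongr
          exact mul_nonneg (pow_nonneg hs0 n) (by linarith)
      _ ≤ a := mul_le_of_le_one_right ha (pow_mul_one_sub_mul_le hs0 hs n)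
  have := (le_div_iff₀ hk1).mpr hmain
  have : 0 ≤ s ^ (n + 1) * a := by positivity
  rw [hn]
  linarith

section Main

variable {d k : ℕ} {Xs : Fin k → Finset (Pt d)}

lemma add_mul_potential_le {C : Finset (Pt d)} {A δ q : ℝ} (hA : 2 ≤ A) (hq0 : 0 ≤ q) (t : ℕ)
    (hqb : q * uncoveredCost Xs C ≤ q * coveredCost Xs C + δ * coveredCost Xs C) :
    q * (coveredCost Xs C + uncoveredCost Xs C) + (1 - q) * potential Xs A t C
      ≤ potential Xs (A + δ) t C := by
  have ha := coveredCost_nonneg Xs C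
  have hrest : 0 ≤ 24 * uncoveredOpt Xs C +
      if t < #(covered Xs C)ᶜ then uncoveredCost Xs C else 0 := by
    have := potential_nonneg (Xs := Xs) le_rfl t C
    simpa [potential] using this
  simp only [potential, add_assoc] at hrest ⊢
  nlinarith [mul_nonneg hq0 (mul_nonneg (sub_nonneg.mpr hA) ha), mul_nonneg hq0 hrest]

theorem expectedCost_le_potential (hk : 1 < k) (hXs : Pairwise (Disjoint on Xs)) {t : ℕ}
    (ht : t < k) {C : Finset (Pt d)} (hC : C.Nonempty) :
    expectedCost (univ.biUnion Xs) Xs t C ≤ potential Xs (2 + t / (k - 1)) t C := by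
  set X := univ.biUnion Xs
  have hk1 : (0 : ℝ) < k - 1 := by
    have : (1 : ℝ) < k := by exact_mod_cast hk
    linarith
  induction t generalizing C with
  | zero =>
    have hb : uncoveredCost Xs C ≤ if 0 < #(covered Xs C)ᶜ then uncoveredCost Xs C else 0 := by
      split_ifs with hu
      · rfl
      · simp [uncoveredCost, card_eq_zero.mp (Nat.eq_zero_of_not_pos hu)]
    have := potential_nonneg (Xs := Xs) (by norm_num : (0 : ℝ) ≤ 2) 0 C
    rw [expectedCost_zero, Phi_eq_coveredCost_add_uncoveredCost hXs, potential]
    simp only [CharP.cast_eq_zero, zero_div, add_zero] at this ⊢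
    nlinarith [coveredCost_nonneg Xs C, uncoveredOpt_nonneg Xs C]
  | succ t ih =>
    set A : ℝ := 2 + t / (k - 1)
    have hA2 : 2 ≤ A := le_add_of_nonneg_right (by positivity)
    have hA3 : A ≤ 3 := by
      have : (t : ℝ) ≤ k - 1 := by
        have : (t : ℝ) + 1 ≤ k := by exact_mod_cast ht.le
        linarith
      have : (t : ℝ) / (k - 1) ≤ 1 := (div_le_one hk1).mpr this
      linarith
    have hcoef : (2 + ((t + 1 : ℕ) : ℝ) / (k - 1)) = A + 1 / (k - 1) := by push_cast; ring
    rcases (Phi_nonneg C X).eq_or_lt with hΦ | hΦ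
    · exact (expectedCost_le_Phi X Xs _ hC).trans (hΦ ▸ potential_nonneg (by positivity) _ C)
    have hiter : expectedCost X Xs (t + 1) C ≤ failProb X Xs C ^ Nat.clog 2 k * Phi C X
        + (1 - failProb X Xs C ^ Nat.clog 2 k) * potential Xs A (t + 1) C := by
      rw [expectedCost_succ, sum_iterK_mul_of_Phi_ne_zero X Xs hΦ.ne']
      refine sum_tryK_mul_le X Xs hΦ (expectedCost_le_Phi X Xs t hC) ?_ _
      calc ∑ x ∈ X with Uncov Xs C x, Phi C {x} * expectedCost X Xs t (insert x C)
          ≤ ∑ x ∈ X with Uncov Xs C x, Phi C {x} * potential Xs A t (insert x C) :=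
            sum_le_sum fun x _ => mul_le_mul_of_nonneg_left
              (ih (by omega) (insert_nonempty x C)) (Phi_nonneg _ _)
        _ ≤ _ := sum_filter_uncov_mul_potential_insert_le hXs hC (by linarith) hA3 t
    rw [failProb_eq hXs, Phi_eq_coveredCost_add_uncoveredCost hXs] at hiter
    have hq0 : 0 ≤ coveredCost Xs C / (coveredCost Xs C + uncoveredCost Xs C) :=
      div_nonneg (coveredCost_nonneg Xs C)
        (add_nonneg (coveredCost_nonneg Xs C) (uncoveredCost_nonneg Xs C))
    rw [hcoef]
    exact hiter.trans (add_mul_potential_le hA2 (pow_nonneg hq0 _) _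
      ((pow_clog_mul_le (coveredCost_nonneg Xs C) (uncoveredCost_nonneg Xs C) hk).trans_eq
        (by ring)))

lemma expectedCost_singleton_le (hk : 1 < k) (hXs : Pairwise (Disjoint on Xs)) {c : Pt d}
    {j : Fin k} (hc : c ∈ Xs j) :
    expectedCost (univ.biUnion Xs) Xs (k - 1) {c}
      ≤ 3 * Phi {c} (Xs j) + 24 * (∑ l, Delta1 (Xs l) - Delta1 (Xs j)) := by
  have h := expectedCost_le_potential hk hXs (by omega : k - 1 < k) (singleton_nonempty c)
  have hcoef : 2 + ((k - 1 : ℕ) : ℝ) / (k - 1) = 3 := by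
    have : (k : ℝ) - 1 ≠ 0 := sub_ne_zero.mpr (by exact_mod_cast hk.ne')
    rw [Nat.cast_sub hk.le, Nat.cast_one, div_self this]
    norm_num
  have hopt : ∑ l ∈ {j}ᶜ, Delta1 (Xs l) = ∑ l, Delta1 (Xs l) - Delta1 (Xs j) := by
    rw [← sum_compl_add_sum {j}, sum_singleton, add_sub_cancel_right]
  simpa [potential, coveredCost, uncoveredOpt, covered_singleton hXs hc, card_compl, hcoef,
    hopt] using h

lemma sum_expectedCost_singleton_le (hk : 1 < k) (hXs : Pairwise (Disjoint on Xs)) :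
    ∑ c ∈ univ.biUnion Xs, expectedCost (univ.biUnion Xs) Xs (k - 1) {c}
      ≤ 24 * #(univ.biUnion Xs) * ∑ l, Delta1 (Xs l) := by
  set OPT := ∑ l, Delta1 (Xs l)
  rw [sum_biUnion (hXs.set_pairwise _), card_biUnion (hXs.set_pairwise _), Nat.cast_sum,
    mul_sum _ _ (24 : ℝ), sum_mul]
  gcongr with j
  calc ∑ c ∈ Xs j, expectedCost (univ.biUnion Xs) Xs (k - 1) {c}
      ≤ ∑ c ∈ Xs j, (3 * Phi {c} (Xs j) + 24 * (OPT - Delta1 (Xs j))) :=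
        sum_le_sum fun c hc => expectedCost_singleton_le hk hXs hc
    _ = 24 * #(Xs j) * OPT - 18 * #(Xs j) * Delta1 (Xs j) := by
        rw [sum_add_distrib, ← mul_sum, sum_Phi_singleton_left, sum_const, nsmul_eq_mul]
        ring
    _ ≤ 24 * #(Xs j) * OPT := by
        have := mul_nonneg (Nat.cast_nonneg (α := ℝ) #(Xs j)) (Delta1_nonneg (Xs j))
        linarith

end Main

end KMeans

theorem stmt_5_general {d k : ℕ} (hk : 1 < k) (X : Finset (Pt d))
    (Xs : Fin k → Finset (Pt d)) (hopt : IsOptPartition k X Xs) :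
    ∑ c ∈ X, (X.card : ℝ)⁻¹ *
        ∑ C' ∈ (X ∪ {c}).powerset, stepsK X Xs (k - 1) {c} C' * Phi C' X ≤
      24 * DeltaK k X := by
  obtain ⟨-, hdisj, rfl, hsum⟩ := hopt
  have hOPT : 0 ≤ ∑ j, Delta1 (Xs j) := sum_nonneg fun j _ => KMeans.Delta1_nonneg (Xs j)
  rw [← hsum, ← mul_sum]
  calc _ ≤ (#(univ.biUnion Xs) : ℝ)⁻¹ * (24 * #(univ.biUnion Xs) * ∑ j, Delta1 (Xs j)) :=
        mul_le_mul_of_nonneg_left (KMeans.sum_expectedCost_singleton_le hk fun j l => hdisj j l)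
          (by positivity)
    _ ≤ 24 * ∑ j, Delta1 (Xs j) := by
        rcases eq_or_ne (#(univ.biUnion Xs) : ℝ) 0 with h | h
        · simp [h, hOPT]
        · rw [mul_comm 24, mul_assoc, inv_mul_cancel_left₀ h]

/-- Run `Query-k-means++` on a finite set `X ⊆ ℝ^d` with `k > 1`:
pick the first center `c` uniformly at random from `X` and perform `k − 1` outer
iterations; the resulting random center set `C` satisfies `E[Φ(C, X)] ≤ 24·Δ_k(X)`. -/
theorem stmt_5 {d k : ℕ} (hk : 1 < k) (X : Finset (Pt d)) (hX : X.Nonempty)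
    (Xs : Fin k → Finset (Pt d)) (hopt : IsOptPartition k X Xs) :
    ∑ c ∈ X, (X.card : ℝ)⁻¹ *
        ∑ C' ∈ (X ∪ {c}).powerset, stepsK X Xs (k - 1) {c} C' * Phi C' X ≤
      24 * DeltaK k X :=
  stmt_5_general hk X Xs hopt
end
end
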